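/- Let M ⊆ ℝ^{V×d} be a linear subspace, A ∈ ℝ^{V×V}, and W ∈ ℝ^{d×d}. Suppose M is invariant under X ↦ AXW (i.e., Z ∈ M implies AZW ∈ M). Then θ_M(AXW) ≤ ‖A‖_op · ‖W‖_op · θ_M(X), where ‖·‖_op is the operator norm induced by the Frobenius norm on matrices. In particular if ‖A‖_op‖W‖_op < 1, linear GNN layers contract the distance to the subspace M geometrically. -/

import Mathlib

/-- Frobenius norm of a real matrix. -/
noncomputable def frobNorm {m n : ℕ} (X : Matrix (Fin m) (Fin n) ℝ) : ℝ :=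
  Real.sqrt (∑ i, ∑ j, (X i j) ^ 2)

/-- Projection loss onto a subspace M: the distance from X to M in Frobenius norm. -/
noncomputable def projLoss {V d : ℕ} (M : Submodule ℝ (Matrix (Fin V) (Fin d) ℝ))
    (X : Matrix (Fin V) (Fin d) ℝ) : ℝ :=
  sInf {r : ℝ | ∃ Z ∈ M, r = frobNorm (X - Z)}

/-- Operator norm of a square matrix induced by the Euclidean (equivalently Frobenius)
norm: the least nonnegative constant c with ‖Mv‖ ≤ c‖v‖ for all v. -/
noncomputable def opNorm {n : ℕ} (A : Matrix (Fin n) (Fin n) ℝ) : ℝ :=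
  sInf {c : ℝ | 0 ≤ c ∧ ∀ v : Fin n → ℝ,
    Real.sqrt (∑ i, (A.mulVec v i) ^ 2) ≤ c * Real.sqrt (∑ i, (v i) ^ 2)}

/-!
The layer `Y ↦ A * Y * W` is Lipschitz for the Frobenius norm with constant `‖A‖_op * ‖W‖_op`:
`A` acts on each column and `W` on each row, and `‖Wᴴ‖_op = ‖W‖_op`. A Lipschitz map sending
`M` into itself shrinks the distance to `M` by its constant, because each `Z ∈ M` is sent to the
competitor `A * Z * W ∈ M`.
-/

open Matrix Metric Set WithLp

-- Matrices carry the Frobenius norm; operator norms are those of `Matrix.toEuclideanCLM`.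
attribute [local instance] Matrix.frobeniusNormedAddCommGroup

theorem LipschitzWith.infDist_le_mul_of_mapsTo {α β : Type*} [PseudoMetricSpace α]
    [PseudoMetricSpace β] {f : α → β} {K : NNReal} (hf : LipschitzWith K f) {s : Set α}
    {t : Set β} (hst : MapsTo f s t) (hs : s.Nonempty) (x : α) :
    infDist (f x) t ≤ K * infDist x s := by
  have : Nonempty s := hs.to_subtype
  rw [infDist_eq_iInf (s := s), Real.mul_iInf_of_nonneg K.coe_nonneg]
  refine le_ciInf fun y => ?_
  calc infDist (f x) t ≤ dist (f x) (f y) := infDist_le_dist_of_mem (hst y.2)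
    _ ≤ K * dist x y := hf.dist_le_mul x y

namespace Matrix

variable {𝕜 : Type*} [RCLike 𝕜] {m n : Type*} [Fintype m] [Fintype n]

theorem frobenius_norm_sq_eq_sum_col (Y : Matrix m n 𝕜) :
    ‖Y‖ ^ 2 = ∑ j, ‖toLp 2 (fun i => Y i j)‖ ^ 2 := by
  rw [← frobenius_norm_transpose]
  exact PiLp.norm_sq_eq_of_L2 (fun _ : n => EuclideanSpace 𝕜 m)
    (toLp 2 fun j => toLp 2 fun i => Y i j)

theorem norm_toEuclideanCLM_conjTranspose [DecidableEq n] (W : Matrix n n 𝕜) :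
    ‖toEuclideanCLM (n := n) (𝕜 := 𝕜) Wᴴ‖ = ‖toEuclideanCLM (n := n) (𝕜 := 𝕜) W‖ := by
  rw [← star_eq_conjTranspose, map_star, ContinuousLinearMap.star_eq_adjoint]
  exact LinearIsometryEquiv.norm_map _ _

theorem frobenius_norm_mul_le_norm_toEuclideanCLM_mul [DecidableEq m] (A : Matrix m m 𝕜)
    (Y : Matrix m n 𝕜) : ‖A * Y‖ ≤ ‖toEuclideanCLM (n := m) (𝕜 := 𝕜) A‖ * ‖Y‖ := by
  set T := toEuclideanCLM (n := m) (𝕜 := 𝕜) A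
  have hcol : ∀ j, toLp 2 (fun i => (A * Y) i j) = T (toLp 2 fun i => Y i j) := fun j => by
    rw [toEuclideanCLM_toLp]
    rfl
  refine (pow_le_pow_iff_left₀ (norm_nonneg _) (by positivity) two_ne_zero).mp ?_
  calc ‖A * Y‖ ^ 2 = ∑ j, ‖T (toLp 2 fun i => Y i j)‖ ^ 2 := by
        simp only [frobenius_norm_sq_eq_sum_col, hcol]
    _ ≤ ∑ j, (‖T‖ * ‖toLp 2 fun i => Y i j‖) ^ 2 := by
        gcongr with j
        exact T.le_opNorm _
    _ = (‖T‖ * ‖Y‖) ^ 2 := by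
        simp only [mul_pow, frobenius_norm_sq_eq_sum_col, Finset.mul_sum]

theorem frobenius_norm_mul_le_mul_norm_toEuclideanCLM [DecidableEq n] (Y : Matrix m n 𝕜)
    (W : Matrix n n 𝕜) : ‖Y * W‖ ≤ ‖Y‖ * ‖toEuclideanCLM (n := n) (𝕜 := 𝕜) W‖ := by
  rw [← frobenius_norm_conjTranspose, conjTranspose_mul, ← norm_toEuclideanCLM_conjTranspose,
    mul_comm, ← frobenius_norm_conjTranspose Y]
  exact frobenius_norm_mul_le_norm_toEuclideanCLM_mul _ _

theorem frobenius_norm_mul_mul_le [DecidableEq m] [DecidableEq n] (A : Matrix m m 𝕜)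
    (Y : Matrix m n 𝕜) (W : Matrix n n 𝕜) :
    ‖A * Y * W‖ ≤
      ‖toEuclideanCLM (n := m) (𝕜 := 𝕜) A‖ * ‖toEuclideanCLM (n := n) (𝕜 := 𝕜) W‖ * ‖Y‖ := by
  calc ‖A * Y * W‖ ≤ ‖A * Y‖ * ‖toEuclideanCLM (n := n) (𝕜 := 𝕜) W‖ :=
        frobenius_norm_mul_le_mul_norm_toEuclideanCLM _ _
    _ ≤ ‖toEuclideanCLM (n := m) (𝕜 := 𝕜) A‖ * ‖Y‖ * ‖toEuclideanCLM (n := n) (𝕜 := 𝕜) W‖ := by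
        gcongr
        exact frobenius_norm_mul_le_norm_toEuclideanCLM_mul _ _
    _ = _ := by ring

end Matrix

theorem frobNorm_eq_norm {m n : ℕ} (X : Matrix (Fin m) (Fin n) ℝ) : frobNorm X = ‖X‖ := by
  rw [frobNorm, frobenius_norm_def, Real.sqrt_eq_rpow]
  simp only [Real.norm_eq_abs, Real.rpow_two, sq_abs]

theorem projLoss_eq_infDist {V d : ℕ} (M : Submodule ℝ (Matrix (Fin V) (Fin d) ℝ))
    (X : Matrix (Fin V) (Fin d) ℝ) : projLoss M X = infDist X M := by
  rw [projLoss, infDist_eq_iInf]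
  congr 1
  ext r
  simp [frobNorm_eq_norm, dist_eq_norm, eq_comm]

theorem opNorm_eq_norm_toEuclideanCLM {n : ℕ} (A : Matrix (Fin n) (Fin n) ℝ) :
    opNorm A = ‖toEuclideanCLM (n := Fin n) (𝕜 := ℝ) A‖ := by
  rw [opNorm, ContinuousLinearMap.norm_def]
  congr 1
  ext c
  refine and_congr_right fun _ => ⟨fun h x => ?_, fun h v => ?_⟩
  · simpa [EuclideanSpace.norm_eq] using h (ofLp x)
  · simpa [EuclideanSpace.norm_eq] using h (toLp 2 v)

/-- If the subspace M is invariant under X ↦ AXW, then the linear GNN layer contracts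
the projection loss: θ_M(AXW) ≤ ‖A‖_op ‖W‖_op θ_M(X). -/
theorem projLoss_contracts_under_invariant_layer (V d : ℕ)
    (M : Submodule ℝ (Matrix (Fin V) (Fin d) ℝ))
    (A : Matrix (Fin V) (Fin V) ℝ) (W : Matrix (Fin d) (Fin d) ℝ)
    (hinv : ∀ Z ∈ M, A * Z * W ∈ M)
    (X : Matrix (Fin V) (Fin d) ℝ) :
    projLoss M (A * X * W) ≤ opNorm A * opNorm W * projLoss M X := by
  set TA := toEuclideanCLM (n := Fin V) (𝕜 := ℝ) A
  set TW := toEuclideanCLM (n := Fin d) (𝕜 := ℝ) W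
  have hlayer : LipschitzWith (‖TA‖₊ * ‖TW‖₊) fun Y : Matrix (Fin V) (Fin d) ℝ => A * Y * W :=
    LipschitzWith.of_dist_le_mul fun Y Z => by
      simpa only [dist_eq_norm, NNReal.coe_mul, coe_nnnorm, ← Matrix.mul_sub, ← Matrix.sub_mul]
        using frobenius_norm_mul_mul_le A (Y - Z) W
  rw [projLoss_eq_infDist, projLoss_eq_infDist, opNorm_eq_norm_toEuclideanCLM,
    opNorm_eq_norm_toEuclideanCLM]
  exact hlayer.infDist_le_mul_of_mapsTo hinv M.nonempty X
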